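/- arXiv:math/0201218 — 5 statements merged into one kernel-verified Lean document; each statement's English description precedes it below -/
import Mathlib

section
/- Let V be a real vector space with nondegenerate symmetric bilinear form φ, I ⊆ V an isotropic line with generator e, and f ∈ I^⊥. Then the map ψ_{e,f}(z) = z + φ(z,e)f − φ(z,f)e − (1/2)φ(f,f)φ(z,e)e is an isometry of (V,φ) which fixes I pointwise and acts as the identity on I^⊥/I. Moreover ψ_{e,f} depends on f only through its class modulo I, and ψ_{e,f} ∘ ψ_{e,f'} = ψ_{e,f+f'} whenever f, f' ∈ I^⊥. -/
/-- For a nondegenerate symmetric bilinear form `φ` on a real vector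
space `V`, an isotropic line `I = ℝe` and `f ∈ I^⊥`, the map
`ψ_{e,f}(z) = z + φ(z,e)f − φ(z,f)e − ½φ(f,f)φ(z,e)e` is an isometry of `(V,φ)` fixing
`I` pointwise and acting as the identity on `I^⊥/I`; it depends on `f` only through its
class mod `I`, and `ψ_{e,f} ∘ ψ_{e,f'} = ψ_{e,f+f'}` for `f, f' ∈ I^⊥`. -/
theorem eichler_transvection_isotropic_line
    {V : Type*} [AddCommGroup V] [Module ℝ V]
    (φ : V →ₗ[ℝ] V →ₗ[ℝ] ℝ)
    (hsymm : ∀ x y : V, φ x y = φ y x)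
    (hnd : ∀ x : V, (∀ y : V, φ x y = 0) → x = 0)
    (e : V) (he : e ≠ 0) (heiso : φ e e = 0)
    (ψ : V → V → V)
    (hψ : ∀ g z : V, ψ g z =
      z + φ z e • g - φ z g • e - ((1/2 : ℝ) * φ g g * φ z e) • e)
    (f : V) (hf : φ f e = 0) :
    (∀ z w : V, φ (ψ f z) (ψ f w) = φ z w) ∧
    Function.Bijective (ψ f) ∧
    (ψ f e = e) ∧
    (∀ z : V, φ z e = 0 → ψ f z - z ∈ Submodule.span ℝ {e}) ∧
    (∀ f' : V, φ f' e = 0 → f - f' ∈ Submodule.span ℝ {e} →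
      ∀ z : V, ψ f z = ψ f' z) ∧
    (∀ f' : V, φ f' e = 0 → ∀ z : V, ψ f (ψ f' z) = ψ (f + f') z) := by
  have hef : φ e f = 0 := by rw [hsymm]; exact hf
  -- general composition law
  have hcomp : ∀ g g' : V, φ g e = 0 → φ g' e = 0 →
      ∀ z : V, ψ g (ψ g' z) = ψ (g + g') z := by
    intro g g' hg hg' z
    have heg : φ e g = 0 := by rw [hsymm]; exact hg
    have heg' : φ e g' = 0 := by rw [hsymm]; exact hg'
    have hgg' : φ g' g = φ g g' := hsymm g' g
    simp only [hψ, map_add, map_sub, map_smul, LinearMap.add_apply, LinearMap.sub_apply,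
      LinearMap.smul_apply, smul_eq_mul, heiso, hg, hg', heg, heg', hgg']
    module
  have hzero : ∀ z : V, ψ 0 z = z := by
    intro z
    simp [hψ]
  refine ⟨?_, ?_, ?_, ?_, ?_, ?_⟩
  · intro z w
    simp only [hψ, map_add, map_sub, map_smul, LinearMap.add_apply, LinearMap.sub_apply,
      LinearMap.smul_apply, smul_eq_mul, heiso, hf, hef]
    rw [hsymm f w, hsymm e w]
    ring
  · have hmf : φ (-f) e = 0 := by simp [hf]
    refine Function.bijective_iff_has_inverse.2 ⟨ψ (-f), ?_, ?_⟩
    · intro z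
      rw [hcomp (-f) f hmf hf z, neg_add_cancel, hzero]
    · intro z
      rw [hcomp f (-f) hf hmf z, add_neg_cancel, hzero]
  · simp [hψ, heiso, hef]
  · intro z hz
    rw [Submodule.mem_span_singleton]
    refine ⟨-φ z f, ?_⟩
    simp only [hψ, hz]
    module
  · intro f' hf' hd z
    rw [Submodule.mem_span_singleton] at hd
    obtain ⟨c, hc⟩ := hd
    have hff' : f = f' + c • e := by
      rw [hc]; abel
    have h1 : φ z f = φ z f' + c * φ z e := by
      rw [hff']; simp [smul_eq_mul]
    have h2 : φ f f = φ f' f' := by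
      rw [hff']
      simp only [map_add, map_smul, LinearMap.add_apply, LinearMap.smul_apply, smul_eq_mul,
        heiso, hf']
      have : φ e f' = 0 := by rw [hsymm]; exact hf'
      rw [this]; ring
    simp only [hψ]
    rw [h1, h2, hff']
    module
  · intro f' hf' z
    exact hcomp f f' hf hf' z
end

section
/- Let Λ be the K3 lattice and h_g = e₃ + (g−1)f₃ with g ≥ 3. If f ∈ Λ is a primitive isotropic vector with f·h_g = 2, then the sublattice spanned by h_g and f is isometric to ⟨2⟩ ⊥ ⟨−2⟩ if g is even, and to U(2) if g is odd. -/
open Matrix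

/-- The hyperbolic plane `U`. -/
def Umat : Matrix (Fin 2) (Fin 2) ℤ := !![0, 1; 1, 0]

/-- Index type of the K3 lattice `Λ = E₈(-1) ⊥ E₈(-1) ⊥ U ⊥ U ⊥ U`. -/
abbrev K3Ix : Type := (Fin 8 ⊕ Fin 8) ⊕ ((Fin 2 ⊕ Fin 2) ⊕ Fin 2)

/-- Gram matrix of the K3 lattice (the `E₈` Gram matrix is its Cartan matrix). -/
def K3gram : Matrix K3Ix K3Ix ℤ :=
  Matrix.fromBlocks (Matrix.fromBlocks (-CartanMatrix.E₈) 0 0 (-CartanMatrix.E₈)) 0 0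
    (Matrix.fromBlocks (Matrix.fromBlocks Umat 0 0 Umat) 0 0 Umat)

/-- The bilinear form of the K3 lattice. -/
def k3bil (x y : K3Ix → ℤ) : ℤ := ∑ i, ∑ j, x i * K3gram i j * y j

/-- `h_g = e₃ + (g-1) f₃`, where `(e₃,f₃)` is a hyperbolic basis of the third `U`. -/
def hvec (g : ℕ) : K3Ix → ℤ :=
  Pi.single (Sum.inr (Sum.inr (0 : Fin 2)) : K3Ix) 1 +
    ((g : ℤ) - 1) • Pi.single (Sum.inr (Sum.inr (1 : Fin 2)) : K3Ix) 1

/-!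
Writing `h = h_g`, the lattice `⟨h, f⟩` has Gram matrix `[[2g-2, 2], [2, 0]]`, and the bases
`(h + c f, h + (c - 1) f)` and `(f, h + c f)` span the same lattice. Since
`(h + c f)² = 2g - 2 + 4c`, for `g = 2k` the choice `c = 1 - k` gives the orthogonal pair of
squares `2` and `-2`, while for `g = 2k + 1` the vector `h - k f` is isotropic and pairs with `f`
to `2`.
-/

open LinearMap (BilinForm)

namespace Submodule

variable {R M : Type*} [CommRing R] [AddCommGroup M] [Module R M]

lemma span_pair_add_add_one_smul_add_smul (h f : M) (c : R) :
    span R {h + (c + 1) • f, h + c • f} = span R {h, f} := by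
  apply le_antisymm <;>
    simp only [span_le, Set.insert_subset_iff, Set.singleton_subset_iff, SetLike.mem_coe,
      mem_span_pair]
  · exact ⟨⟨1, c + 1, by module⟩, ⟨1, c, by module⟩⟩
  · exact ⟨⟨-c, c + 1, by module⟩, ⟨1, -1, by module⟩⟩

lemma span_pair_right_add_smul (h f : M) (c : R) :
    span R {f, h + c • f} = span R {h, f} := by
  apply le_antisymm <;>
    simp only [span_le, Set.insert_subset_iff, Set.singleton_subset_iff, SetLike.mem_coe,
      mem_span_pair]
  · exact ⟨⟨0, 1, by module⟩, ⟨1, c, by module⟩⟩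
  · exact ⟨⟨-c, 1, by module⟩, ⟨1, 0, by module⟩⟩

end Submodule

namespace LinearMap.BilinForm

variable {R M : Type*} [CommRing R] [AddCommGroup M] [Module R M] {B : BilinForm R M}

lemma IsSymm.apply_add_smul_add_smul (hB : B.IsSymm) (h f : M) (a b : R) :
    B (h + a • f) (h + b • f) = B h h + (a + b) * B f h + a * b * B f f := by
  simp only [map_add, map_smul, LinearMap.add_apply, LinearMap.smul_apply, smul_eq_mul,
    hB.eq h f]
  ring

variable {h f : M}

lemma IsSymm.exists_span_eq_of_apply_self_eq_four_mul_sub_two (hB : B.IsSymm) (hff : B f f = 0)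
    (hfh : B f h = 2) {k : R} (hhh : B h h = 4 * k - 2) :
    ∃ a b : M, Submodule.span R {a, b} = Submodule.span R {h, f} ∧
      B a a = 2 ∧ B b b = -2 ∧ B a b = 0 := by
  refine ⟨h + (-k + 1) • f, h + (-k) • f, Submodule.span_pair_add_add_one_smul_add_smul h f (-k),
    ?_, ?_, ?_⟩ <;>
  · rw [hB.apply_add_smul_add_smul, hhh, hfh, hff]
    ring

lemma IsSymm.exists_span_eq_of_apply_self_eq_four_mul (hB : B.IsSymm) (hff : B f f = 0)
    (hfh : B f h = 2) {k : R} (hhh : B h h = 4 * k) :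
    ∃ a b : M, Submodule.span R {a, b} = Submodule.span R {h, f} ∧
      B a a = 0 ∧ B b b = 0 ∧ B a b = 2 := by
  refine ⟨f, h + (-k) • f, Submodule.span_pair_right_add_smul h f (-k), hff, ?_, ?_⟩
  · rw [hB.apply_add_smul_add_smul, hhh, hfh, hff]
    ring
  · simp only [map_add, map_smul, smul_eq_mul, hfh, hff]
    ring

end LinearMap.BilinForm

lemma k3bil_eq_toBilin' (x y : K3Ix → ℤ) : k3bil x y = K3gram.toBilin' x y :=
  (Matrix.toBilin'_apply K3gram x y).symm

lemma Umat_isSymm : Umat.IsSymm := by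
  decide

lemma K3gram_isSymm : K3gram.IsSymm :=
  .fromBlocks (.fromBlocks CartanMatrix.E₈_isSymm.neg transpose_zero CartanMatrix.E₈_isSymm.neg)
    transpose_zero (.fromBlocks (.fromBlocks Umat_isSymm transpose_zero Umat_isSymm)
      transpose_zero Umat_isSymm)

lemma toBilin'_K3gram_isSymm : K3gram.toBilin'.IsSymm :=
  Matrix.isSymm_toBilin'_iff_isSymm.mpr K3gram_isSymm

lemma toBilin'_K3gram_hvec_self (g : ℕ) :
    K3gram.toBilin' (hvec g) (hvec g) = 2 * ((g : ℤ) - 1) := by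
  simp only [hvec, map_add, map_smul, LinearMap.add_apply, LinearMap.smul_apply,
    Matrix.toBilin'_single, smul_eq_mul, K3gram, Umat, Fin.isValue, fromBlocks_apply₂₂,
    of_apply, cons_val', cons_val_zero, cons_val_fin_one, cons_val_one, mul_one, zero_add, mul_zero, add_zero]
  ring

theorem k3_span_hg_f_degree_two_classification_general
    (g : ℕ) (f : K3Ix → ℤ)
    (hfiso : k3bil f f = 0) (hfh : k3bil f (hvec g) = 2) :
    (Even g → ∃ a b : K3Ix → ℤ,
      Submodule.span ℤ {a, b} = Submodule.span ℤ {hvec g, f} ∧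
      k3bil a a = 2 ∧ k3bil b b = -2 ∧ k3bil a b = 0) ∧
    (Odd g → ∃ a b : K3Ix → ℤ,
      Submodule.span ℤ {a, b} = Submodule.span ℤ {hvec g, f} ∧
      k3bil a a = 0 ∧ k3bil b b = 0 ∧ k3bil a b = 2) := by
  simp only [k3bil_eq_toBilin'] at hfiso hfh ⊢
  have hhh := toBilin'_K3gram_hvec_self g
  constructor
  · rintro ⟨k, rfl⟩
    exact toBilin'_K3gram_isSymm.exists_span_eq_of_apply_self_eq_four_mul_sub_two hfiso hfh
      (k := k) (by rw [hhh]; push_cast; ring)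
  · rintro ⟨k, rfl⟩
    exact toBilin'_K3gram_isSymm.exists_span_eq_of_apply_self_eq_four_mul hfiso hfh
      (k := k) (by rw [hhh]; push_cast; ring)

/-- If `f` is a primitive isotropic vector of the K3 lattice with
`f·h_g = 2` (`g ≥ 3`), then the sublattice spanned by `h_g` and `f` is isometric to
`⟨2⟩ ⊥ ⟨-2⟩` if `g` is even, and to `U(2)` if `g` is odd. -/
theorem k3_span_hg_f_degree_two_classification
    (g : ℕ) (hg : 3 ≤ g) (f : K3Ix → ℤ)
    (hfprim : ∀ (m : ℤ) (w : K3Ix → ℤ), f = m • w → IsUnit m)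
    (hfiso : k3bil f f = 0) (hfh : k3bil f (hvec g) = 2) :
    (Even g → ∃ a b : K3Ix → ℤ,
      Submodule.span ℤ {a, b} = Submodule.span ℤ {hvec g, f} ∧
      k3bil a a = 2 ∧ k3bil b b = -2 ∧ k3bil a b = 0) ∧
    (Odd g → ∃ a b : K3Ix → ℤ,
      Submodule.span ℤ {a, b} = Submodule.span ℤ {hvec g, f} ∧
      k3bil a a = 0 ∧ k3bil b b = 0 ∧ k3bil a b = 2) :=
  k3_span_hg_f_degree_two_classification_general g f hfiso hfh
end

section
/- Let M be an integral lattice of hyperbolic signature (1,r) with r ≥ 2, containing a vector h with h·h = 2g−2 where g ≥ 2, and suppose v₁, v₂ ∈ M are isotropic vectors linearly independent together with h, with v_i·h ∈ {1,2} for i = 1,2 (and v_i·h = 1 required if g = 2). Then g ∈ {3,4}, v₁·h = v₂·h = 2, and v₁·v₂ = 1. -/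
/-!
Let `m = g - 1`. A vector of positive norm in a space of signature `(1, r)` has a negative
definite orthogonal complement. The vectors `a₂ v₁ - a₁ v₂` and
`m (a₂ v₁ + a₁ v₂) - a₁ a₂ h` are orthogonal to `h` and nonzero, of norms `-2 a₁ a₂ λ` and
`2 m a₁ a₂ (m λ - a₁ a₂)`. Hence `0 < λ` and `m λ < a₁ a₂ ≤ 4`, which leaves only
`a₁ = a₂ = 2`, `λ = 1` and `m ∈ {2, 3}` (the case `m = 1` is excluded since then `a₁ = a₂ = 1`).
-/

theorem LinearIndependent.smul_add_smul_add_smul_ne_zero {K V : Type*} [Ring K]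
    [AddCommGroup V] [Module K V] {u v w : V} (hli : LinearIndependent K ![u, v, w])
    (a : K) {b : K} (hb : b ≠ 0) (c : K) : a • u + b • v + c • w ≠ 0 := by
  intro h0
  have := Fintype.linearIndependent_iff.mp hli ![a, b, c]
    (by simpa [Fin.sum_univ_three] using h0) 1
  exact hb (by simpa using this)

section BilinearForm

variable {V : Type*} [AddCommGroup V] [Module ℝ V] {φ : V →ₗ[ℝ] V →ₗ[ℝ] ℝ}

-- The `P`-component of `x` is `c` times that of `h`, so `c • h - x ∈ N`, although its norm
-- `c ^ 2 * φ h h + φ x x` is nonnegative.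
theorem apply_self_neg_of_orthogonal (hsymm : ∀ x y : V, φ x y = φ y x)
    {P N : Submodule ℝ V} (hPN : IsCompl P N) (hP : Module.finrank ℝ P = 1)
    (hN : ∀ x ∈ N, x ≠ 0 → φ x x < 0) {h x : V} (hh : 0 < φ h h) (hxh : φ x h = 0)
    (hx : x ≠ 0) : φ x x < 0 := by
  by_contra! hxx
  obtain ⟨ph, nh, hph, hnh, hph_nh⟩ := Submodule.codisjoint_iff_exists_add_eq.mp hPN.codisjoint h
  obtain ⟨px, nx, hpx, hnx, hpx_nx⟩ := Submodule.codisjoint_iff_exists_add_eq.mp hPN.codisjoint x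
  have hph0 : ph ≠ 0 := by
    rintro rfl
    rw [zero_add] at hph_nh
    exact (hN h (hph_nh ▸ hnh) (by rintro rfl; simp at hh)).not_gt hh
  obtain ⟨c, hc⟩ := (finrank_eq_one_iff_of_nonzero' (⟨ph, hph⟩ : P) (by simpa using hph0)).mp
    hP ⟨px, hpx⟩
  replace hc : c • ph = px := congrArg Subtype.val hc
  have hyN : c • h - x ∈ N := by
    have : c • h - x = c • nh - nx := by rw [← hph_nh, ← hpx_nx, ← hc, smul_add]; abel
    exact this ▸ N.sub_mem (N.smul_mem c hnh) hnx
  have hyy : φ (c • h - x) (c • h - x) = c ^ 2 * φ h h + φ x x := by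
    simp only [map_sub, map_smul, LinearMap.sub_apply, LinearMap.smul_apply, smul_eq_mul,
      hxh, hsymm h x]
    ring
  have hy0 : c • h - x = 0 := by
    by_contra hy0
    nlinarith [hN _ hyN hy0, sq_nonneg c]
  have hx_eq : x = c • h := (sub_eq_zero.mp hy0).symm
  rw [hx_eq, map_smul, LinearMap.smul_apply, smul_eq_mul] at hxh
  have hc0 : c = 0 := (mul_eq_zero.mp hxh).resolve_right hh.ne'
  exact hx (by rw [hx_eq, hc0, zero_smul])

theorem isotropic_pair_bounds (hsymm : ∀ x y : V, φ x y = φ y x) {h v₁ v₂ : V}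
    (hli : LinearIndependent ℝ ![h, v₁, v₂])
    (hneg : ∀ x, φ x h = 0 → x ≠ 0 → φ x x < 0) {m a₁ a₂ lam : ℝ} (hm : 0 < m)
    (ha₁ : 0 < a₁) (ha₂ : 0 < a₂) (hhh : φ h h = 2 * m) (hv₁ : φ v₁ v₁ = 0)
    (hv₂ : φ v₂ v₂ = 0) (hv₁h : φ v₁ h = a₁) (hv₂h : φ v₂ h = a₂) (hv₁v₂ : φ v₁ v₂ = lam) :
    0 < lam ∧ m * lam < a₁ * a₂ := by
  have hhv₁ : φ h v₁ = a₁ := hsymm h v₁ ▸ hv₁h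
  have hhv₂ : φ h v₂ = a₂ := hsymm h v₂ ▸ hv₂h
  have hv₂v₁ : φ v₂ v₁ = lam := hsymm v₂ v₁ ▸ hv₁v₂
  set d := a₂ • v₁ - a₁ • v₂
  set s := (-(a₁ * a₂)) • h + (m * a₂) • v₁ + (m * a₁) • v₂
  have hdh : φ d h = 0 := by
    simp only [d, map_sub, map_smul, LinearMap.sub_apply, LinearMap.smul_apply, smul_eq_mul,
      hv₁h, hv₂h]
    ring
  have hsh : φ s h = 0 := by
    simp only [s, map_add, map_smul, LinearMap.add_apply, LinearMap.smul_apply, smul_eq_mul,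
      hhh, hv₁h, hv₂h]
    ring
  have hdd : φ d d = -2 * a₁ * a₂ * lam := by
    simp only [d, map_sub, map_smul, LinearMap.sub_apply, LinearMap.smul_apply, smul_eq_mul,
      hv₁, hv₂, hv₁v₂, hv₂v₁]
    ring
  have hss : φ s s = 2 * m * a₁ * a₂ * (m * lam - a₁ * a₂) := by
    simp only [s, map_add, map_smul, LinearMap.add_apply, LinearMap.smul_apply, smul_eq_mul,
      hhh, hv₁, hv₂, hv₁h, hv₂h, hhv₁, hhv₂, hv₁v₂, hv₂v₁]
    ring
  have hd0 : d ≠ 0 := by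
    simpa [d, sub_eq_add_neg] using hli.smul_add_smul_add_smul_ne_zero 0 ha₂.ne' (-a₁)
  have hs0 : s ≠ 0 := hli.smul_add_smul_add_smul_ne_zero _ (mul_pos hm ha₂).ne' _
  have hd := hdd ▸ hneg d hdh hd0
  have hs := hss ▸ hneg s hsh hs0
  have ha : 0 < a₁ * a₂ := mul_pos ha₁ ha₂
  constructor
  · nlinarith
  · nlinarith [mul_pos hm ha]

end BilinearForm

theorem genus_eq_and_of_mul_lt {g : ℕ} (hg : 2 ≤ g) {a₁ a₂ lam : ℤ}
    (ha₁ : a₁ = 1 ∨ a₁ = 2) (ha₂ : a₂ = 1 ∨ a₂ = 2) (hg2 : g = 2 → a₁ = 1 ∧ a₂ = 1)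
    (hlam : 0 < lam) (hbound : ((g : ℤ) - 1) * lam < a₁ * a₂) :
    (g = 3 ∨ g = 4) ∧ a₁ = 2 ∧ a₂ = 2 ∧ lam = 1 := by
  obtain rfl | hg3 := eq_or_lt_of_le hg
  · obtain ⟨rfl, rfl⟩ := hg2 rfl
    omega
  have hge : (g : ℤ) - 1 ≤ ((g : ℤ) - 1) * lam := le_mul_of_one_le_right (by omega) hlam
  have hlam2 : 2 * lam ≤ ((g : ℤ) - 1) * lam := mul_le_mul_of_nonneg_right (by omega) hlam.le
  rcases ha₁ with rfl | rfl <;> rcases ha₂ with rfl | rfl <;> omega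

theorem hyperbolic_lattice_two_isotropic_vectors_forces_g_general
    {V : Type*} [AddCommGroup V] [Module ℝ V]
    (r : ℕ) (g : ℕ) (hg : 2 ≤ g)
    (φ : V →ₗ[ℝ] V →ₗ[ℝ] ℝ)
    (hsymm : ∀ x y : V, φ x y = φ y x)
    (hsig : ∃ P N : Submodule ℝ V, IsCompl P N ∧
      Module.finrank ℝ P = 1 ∧ Module.finrank ℝ N = r ∧
      (∀ x ∈ P, x ≠ 0 → 0 < φ x x) ∧
      (∀ x ∈ N, x ≠ 0 → φ x x < 0) ∧
      (∀ x ∈ P, ∀ y ∈ N, φ x y = 0))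
    (h v₁ v₂ : V)
    (hli : LinearIndependent ℝ ![h, v₁, v₂])
    (hhh : φ h h = 2 * (g : ℝ) - 2)
    (hv₁ : φ v₁ v₁ = 0) (hv₂ : φ v₂ v₂ = 0)
    (a₁ a₂ lam : ℤ)
    (ha₁ : φ v₁ h = (a₁ : ℝ)) (ha₂ : φ v₂ h = (a₂ : ℝ))
    (hlam : φ v₁ v₂ = (lam : ℝ))
    (ha₁m : a₁ = 1 ∨ a₁ = 2) (ha₂m : a₂ = 1 ∨ a₂ = 2)
    (hg2 : g = 2 → a₁ = 1 ∧ a₂ = 1) :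
    (g = 3 ∨ g = 4) ∧ a₁ = 2 ∧ a₂ = 2 ∧ lam = 1 := by
  obtain ⟨P, N, hPN, hP, -, -, hN, -⟩ := hsig
  have hm : (0 : ℝ) < g - 1 := by
    have : (2 : ℝ) ≤ g := by exact_mod_cast hg
    linarith
  have hneg : ∀ x, φ x h = 0 → x ≠ 0 → φ x x < 0 := fun x =>
    apply_self_neg_of_orthogonal hsymm hPN hP hN (by linarith)
  have hpos : ∀ a : ℤ, a = 1 ∨ a = 2 → (0 : ℝ) < a := by
    rintro a (rfl | rfl) <;> norm_num
  obtain ⟨hlam_pos, hbound⟩ := isotropic_pair_bounds hsymm hli hneg hm (hpos a₁ ha₁m)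
    (hpos a₂ ha₂m) (by linarith) hv₁ hv₂ ha₁ ha₂ hlam
  exact genus_eq_and_of_mul_lt hg ha₁m ha₂m hg2 (by exact_mod_cast hlam_pos)
    (by exact_mod_cast hbound)

/-- Let `φ` have hyperbolic signature `(1,r)`, `r ≥ 2`, on a real vector
space, `h` a vector with `h·h = 2g-2` (`g ≥ 2`), and `v₁, v₂` isotropic vectors, linearly
independent together with `h`, with integral inner products `aᵢ = vᵢ·h ∈ {1,2}` (with
`aᵢ = 1` required when `g = 2`) and `λ = v₁·v₂ ∈ ℤ`.  Then `g ∈ {3,4}`,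
`a₁ = a₂ = 2` and `λ = 1`. -/
theorem hyperbolic_lattice_two_isotropic_vectors_forces_g
    {V : Type*} [AddCommGroup V] [Module ℝ V] [FiniteDimensional ℝ V]
    (r : ℕ) (hr : 2 ≤ r) (g : ℕ) (hg : 2 ≤ g)
    (φ : V →ₗ[ℝ] V →ₗ[ℝ] ℝ)
    (hsymm : ∀ x y : V, φ x y = φ y x)
    (hsig : ∃ P N : Submodule ℝ V, IsCompl P N ∧
      Module.finrank ℝ P = 1 ∧ Module.finrank ℝ N = r ∧
      (∀ x ∈ P, x ≠ 0 → 0 < φ x x) ∧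
      (∀ x ∈ N, x ≠ 0 → φ x x < 0) ∧
      (∀ x ∈ P, ∀ y ∈ N, φ x y = 0))
    (h v₁ v₂ : V)
    (hli : LinearIndependent ℝ ![h, v₁, v₂])
    (hhh : φ h h = 2 * (g : ℝ) - 2)
    (hv₁ : φ v₁ v₁ = 0) (hv₂ : φ v₂ v₂ = 0)
    (a₁ a₂ lam : ℤ)
    (ha₁ : φ v₁ h = (a₁ : ℝ)) (ha₂ : φ v₂ h = (a₂ : ℝ))
    (hlam : φ v₁ v₂ = (lam : ℝ))
    (ha₁m : a₁ = 1 ∨ a₁ = 2) (ha₂m : a₂ = 1 ∨ a₂ = 2)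
    (hg2 : g = 2 → a₁ = 1 ∧ a₂ = 1) :
    (g = 3 ∨ g = 4) ∧ a₁ = 2 ∧ a₂ = 2 ∧ lam = 1 :=
  hyperbolic_lattice_two_isotropic_vectors_forces_g_general r g hg φ hsymm hsig h v₁ v₂ hli hhh hv₁
    hv₂ a₁ a₂ lam ha₁ ha₂ hlam ha₁m ha₂m hg2
end

section
/- Let C be an open nondegenerate convex cone in a finite-dimensional real vector space L with a ℚ-structure, and let C₊ be the convex hull of the set of rational points in the closure of C. Then C₊ is a convex cone containing C, and C₊ does not contain any affine line. -/
open scoped Pointwise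


/-- Let `C` be an open nondegenerate convex cone in a finite-dimensional
real vector space `L` with a `ℚ`-structure (a dense `ℚ`-subspace `Lq` of rational points),
and let `C₊` be the convex hull of the set of rational points of the closure of `C`.
Then `C₊` is a convex cone containing `C` and `C₊` contains no affine line. -/
theorem rational_hull_of_cone_is_nondegenerate_cone
    {L : Type*} [NormedAddCommGroup L] [NormedSpace ℝ L] [FiniteDimensional ℝ L]
    [Module ℚ L] [IsScalarTower ℚ ℝ L]
    (Lq : Submodule ℚ L) (hdense : Dense (Lq : Set L))
    (C : Set L) (hopen : IsOpen C) (hconv : Convex ℝ C)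
    (hcone : ∀ x ∈ C, ∀ t : ℝ, 0 < t → t • x ∈ C)
    (hnd : ¬∃ (x v : L), v ≠ 0 ∧ ∀ t : ℝ, x + t • v ∈ C) :
    C ⊆ convexHull ℝ ((Lq : Set L) ∩ closure C) ∧
    Convex ℝ (convexHull ℝ ((Lq : Set L) ∩ closure C)) ∧
    (∀ x ∈ convexHull ℝ ((Lq : Set L) ∩ closure C), ∀ t : ℝ, 0 < t →
      t • x ∈ convexHull ℝ ((Lq : Set L) ∩ closure C)) ∧
    ¬∃ (x v : L), v ≠ 0 ∧ ∀ t : ℝ,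
      x + t • v ∈ convexHull ℝ ((Lq : Set L) ∩ closure C) := by
  rcases C.eq_empty_or_nonempty with hCe | ⟨c0, hc0⟩
  · have hSe : (Lq : Set L) ∩ closure C = ∅ := by simp [hCe]
    rw [hSe, convexHull_empty]
    refine ⟨by simp [hCe], convex_empty, by simp, ?_⟩
    rintro ⟨x, v, hv, hline⟩
    simpa using hline 0
  set S : Set L := (Lq : Set L) ∩ closure C with hSdef
  -- 0 is in the closure of C
  have h0 : (0 : L) ∈ closure C := by
    have hcont : Filter.Tendsto (fun t : ℝ => t • c0) (nhdsWithin 0 (Set.Ioi 0)) (nhds 0) := by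
      have h : Continuous fun t : ℝ => t • c0 := continuous_id.smul continuous_const
      simpa using (h.tendsto 0).mono_left nhdsWithin_le_nhds
    exact mem_closure_of_tendsto hcont
      (Filter.eventually_of_mem self_mem_nhdsWithin fun t ht => hcone c0 hc0 t ht)
  have h0S : (0 : L) ∈ S := ⟨Lq.zero_mem, h0⟩
  have h0K : (0 : L) ∈ convexHull ℝ S := subset_convexHull ℝ S h0S
  have hKconv : Convex ℝ (convexHull ℝ S) := convex_convexHull ℝ S
  -- rational points of C
  set D : Set L := (Lq : Set L) ∩ C with hDdef
  have hDS : D ⊆ S := Set.inter_subset_inter_right _ subset_closure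
  -- C is contained in the closure of D
  have hDdense : C ⊆ closure D := by
    intro x hx
    rw [mem_closure_iff]
    intro o ho hxo
    obtain ⟨p, hp, hpo⟩ := hdense.exists_mem_open (ho.inter hopen) ⟨x, hxo, hx⟩
    exact ⟨p, hpo.1, hp, hpo.2⟩
  -- affine span of D is everything
  have haff : affineSpan ℝ D = ⊤ := by
    have h1 : affineSpan ℝ C = ⊤ := hopen.affineSpan_eq_top ⟨c0, hc0⟩
    have h2 : C ⊆ (affineSpan ℝ D : Set L) := by
      refine hDdense.trans (closure_minimal (subset_affineSpan ℝ D) ?_)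
      exact (affineSpan ℝ D).closed_of_finiteDimensional
    exact top_unique (h1 ▸ affineSpan_le.2 h2)
  obtain ⟨y, hy⟩ : (interior (convexHull ℝ D)).Nonempty :=
    interior_convexHull_nonempty_iff_affineSpan_eq_top.2 haff
  -- Part 1
  have part1 : C ⊆ convexHull ℝ S := by
    intro x hx
    have hcont : Filter.Tendsto (fun ε : ℝ => x + ε • (x - y)) (nhds 0) (nhds x) := by
      have h : Continuous fun ε : ℝ => x + ε • (x - y) :=
        continuous_const.add (continuous_id.smul continuous_const)
      simpa using h.tendsto 0
    have hev : ∀ᶠ ε in nhdsWithin (0:ℝ) (Set.Ioi 0), x + ε • (x - y) ∈ C :=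
      (hcont.eventually (hopen.mem_nhds hx)).filter_mono nhdsWithin_le_nhds
    obtain ⟨ε, hεC, hε⟩ := (hev.and eventually_mem_nhdsWithin).exists
    have hε : (0:ℝ) < ε := hε
    have hne : (0:ℝ) < 1 + ε := by linarith
    have hx'cl : x + ε • (x - y) ∈ closure (convexHull ℝ D) :=
      closure_mono (subset_convexHull ℝ D) (hDdense hεC)
    have ht : ε / (1 + ε) ∈ Set.Ioc (0:ℝ) 1 := by
      constructor
      · positivity
      · rw [div_le_one hne]; linarith
    have key : (x + ε • (x - y)) + (ε / (1 + ε)) • (y - (x + ε • (x - y))) = x := by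
      have h1 : (ε / (1 + ε)) * (1 + ε) = ε := by field_simp
      match_scalars <;> field_simp <;> ring
    have : x ∈ interior (convexHull ℝ D) := by
      rw [← key]
      exact (convex_convexHull ℝ D).add_smul_sub_mem_interior' hx'cl hy ht
    exact convexHull_mono hDS (interior_subset this)
  -- small scalings stay in the hull (using 0 ∈ hull)
  have hsmall : ∀ z ∈ convexHull ℝ S, ∀ s : ℝ, 0 < s → s ≤ 1 → s • z ∈ convexHull ℝ S := by
    intro z hz s hs hs1
    have := hKconv hz h0K hs.le (by linarith : (0:ℝ) ≤ 1 - s) (by ring)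
    simpa using this
  -- the cone property
  have part3 : ∀ x ∈ convexHull ℝ S, ∀ t : ℝ, 0 < t → t • x ∈ convexHull ℝ S := by
    intro x hx t ht
    obtain ⟨q, hq⟩ := exists_rat_gt t
    have hq0 : (0:ℝ) < (q:ℝ) := lt_trans ht hq
    have hqS : (q:ℝ) • S ⊆ S := by
      rintro _ ⟨p, ⟨hpL, hpC⟩, rfl⟩
      constructor
      · show (q:ℝ) • p ∈ (Lq : Set L)
        have h1 : (q:ℝ) • p = q • p := by
          rw [← smul_one_smul ℝ q p]; norm_num
        rw [h1]
        exact Lq.smul_mem q hpL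
      · exact map_mem_closure (continuous_const_smul _) hpC (fun z hz => hcone z hz _ hq0)
    have hqK : (q:ℝ) • x ∈ convexHull ℝ S := by
      have h2 : (q:ℝ) • x ∈ (q:ℝ) • convexHull ℝ S := Set.smul_mem_smul_set hx
      rw [← convexHull_smul] at h2
      exact convexHull_mono hqS h2
    have h3 := hsmall _ hqK (t/(q:ℝ)) (by positivity) (by rw [div_le_one hq0]; exact hq.le)
    rwa [smul_smul, div_mul_cancel₀ _ hq0.ne'] at h3
  refine ⟨part1, hKconv, part3, ?_⟩
  -- no line
  rintro ⟨x, v, hv, hline⟩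
  have hsub : convexHull ℝ S ⊆ closure C :=
    convexHull_min Set.inter_subset_right hconv.closure
  refine hnd ⟨(1/2 : ℝ) • c0 + (1/2 : ℝ) • x, (1/2 : ℝ) • v,
    smul_ne_zero (by norm_num) hv, fun t => ?_⟩
  have h2 : (1/2:ℝ) • c0 + (1/2:ℝ) • (x + t • v) ∈ interior C :=
    hconv.combo_interior_closure_mem_interior (by rwa [hopen.interior_eq])
      (hsub (hline t)) one_half_pos one_half_pos.le (by norm_num)
  rw [hopen.interior_eq] at h2
  have heq : (1/2 : ℝ) • c0 + (1/2 : ℝ) • x + t • ((1/2 : ℝ) • v)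
      = (1/2:ℝ) • c0 + (1/2:ℝ) • (x + t • v) := by module
  rw [heq]
  exact h2
end

section
/- Let L be a real vector space with a nondegenerate symmetric bilinear form of signature (1, n−1), and C one of the two connected components of {x ∈ L : x·x > 0}. If n ≥ 3 and v ∈ closure(C) is isotropic and nonzero, then the fixed-point subspace in L of the group of isometries of (L,·) preserving C and fixing v equals the span of v. -/
section Eichler
variable {L : Type*} [AddCommGroup L] [Module ℝ L]

noncomputable def Emap (φ : L →ₗ[ℝ] L →ₗ[ℝ] ℝ) (v f : L) : L →ₗ[ℝ] L :=
  LinearMap.id + (φ.flip v).smulRight f - (φ.flip f).smulRight v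
    - (φ.flip v).smulRight ((1/2 * φ f f) • v)

set_option maxHeartbeats 1000000 in
theorem Emap_apply (φ : L →ₗ[ℝ] L →ₗ[ℝ] ℝ) (v f x : L) :
    Emap φ v f x = x + φ x v • f - φ x f • v - (1/2 * φ f f * φ x v) • v := by
  simp only [Emap, LinearMap.sub_apply, LinearMap.add_apply, LinearMap.id_apply,
    LinearMap.smulRight_apply, LinearMap.flip_apply]
  module

theorem Emap_isometry (φ : L →ₗ[ℝ] L →ₗ[ℝ] ℝ) (v f : L)
    (hsymm : ∀ x y, φ x y = φ y x) (hviso : φ v v = 0) (hfv : φ f v = 0) (x y : L) :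
    φ (Emap φ v f x) (Emap φ v f y) = φ x y := by
  have hvf : φ v f = 0 := (hsymm v f).trans hfv
  simp only [Emap_apply, map_add, map_sub, map_smul, LinearMap.add_apply,
    LinearMap.sub_apply, LinearMap.smul_apply, smul_eq_mul, hviso, hfv, hvf]
  have h1 := hsymm x y
  have h2 := hsymm f y
  have h3 := hsymm v y
  linear_combination (φ x v) * h2 - (1/2 * φ x v * φ f f + φ x f) * h3

theorem Emap_comp_neg (φ : L →ₗ[ℝ] L →ₗ[ℝ] ℝ) (v f : L)
    (hsymm : ∀ x y, φ x y = φ y x) (hviso : φ v v = 0) (hfv : φ f v = 0) (x : L) :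
    Emap φ v f (Emap φ v (-f) x) = x := by
  have hvf : φ v f = 0 := (hsymm v f).trans hfv
  simp only [Emap_apply, map_add, map_sub, map_smul, map_neg, LinearMap.add_apply,
    LinearMap.sub_apply, LinearMap.smul_apply, LinearMap.neg_apply, smul_eq_mul,
    hviso, hfv, hvf, smul_neg, neg_neg, mul_zero, zero_mul, mul_neg, neg_zero,
    zero_smul, smul_zero, add_zero, sub_zero, zero_add]
  module

theorem Emap_fix (φ : L →ₗ[ℝ] L →ₗ[ℝ] ℝ) (v f : L)
    (hsymm : ∀ x y, φ x y = φ y x) (hviso : φ v v = 0) (hfv : φ f v = 0) :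
    Emap φ v f v = v := by
  have hvf : φ v f = 0 := (hsymm v f).trans hfv
  simp [Emap_apply, hviso, hvf]
end Eichler

/-- Let `L` be an `n`-dimensional real vector space (`n ≥ 3`) with a
nondegenerate symmetric bilinear form `φ` of signature `(1, n-1)`, `C` one of the two
connected components of `{x | φ(x,x) > 0}`, and `v ∈ closure C` a nonzero isotropic
vector.  Then the common fixed-point set of the group of isometries of `(L, φ)`
preserving `C` and fixing `v` is exactly the line spanned by `v`. -/
theorem fixed_space_of_stabilizer_of_isotropic_vector
    {L : Type*} [NormedAddCommGroup L] [NormedSpace ℝ L] [FiniteDimensional ℝ L]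
    (n : ℕ) (hn : 3 ≤ n) (hdim : Module.finrank ℝ L = n)
    (φ : L →ₗ[ℝ] L →ₗ[ℝ] ℝ)
    (hsymm : ∀ x y : L, φ x y = φ y x)
    (hnd : ∀ x : L, (∀ y : L, φ x y = 0) → x = 0)
    (hsig : ∃ P N : Submodule ℝ L, IsCompl P N ∧
      Module.finrank ℝ P = 1 ∧ Module.finrank ℝ N = n - 1 ∧
      (∀ x ∈ P, x ≠ 0 → 0 < φ x x) ∧
      (∀ x ∈ N, x ≠ 0 → φ x x < 0) ∧
      (∀ x ∈ P, ∀ y ∈ N, φ x y = 0))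
    (C : Set L)
    (hC : ∃ x₀ : L, 0 < φ x₀ x₀ ∧ C = connectedComponentIn {x : L | 0 < φ x x} x₀)
    (v : L) (hv : v ∈ closure C) (hviso : φ v v = 0) (hvne : v ≠ 0) :
    {x : L | ∀ g : L ≃ₗ[ℝ] L,
        (∀ a b : L, φ (g a) (g b) = φ a b) → g '' C = C → g v = v → g x = x}
      = (Submodule.span ℝ {v} : Set L) := by
  obtain ⟨x₀, hx₀, hCeq⟩ := hC
  set S : Set L := {x : L | 0 < φ x x} with hSdef
  have hx₀S : x₀ ∈ S := hx₀
  have hCsubS : C ⊆ S := hCeq ▸ connectedComponentIn_subset S x₀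
  -- each Eichler map of an f ⊥ v maps C into C
  have himg : ∀ f : L, φ f v = 0 → Emap φ v f '' C ⊆ C := by
    intro f hfv
    have hmemS : ∀ t : ℝ, Emap φ v (t • f) x₀ ∈ S := by
      intro t
      have htf : φ (t • f) v = 0 := by rw [map_smul]; simp [hfv]
      have h := Emap_isometry φ v (t • f) hsymm hviso htf x₀ x₀
      simpa [hSdef, h] using hx₀
    have hpcont : Continuous fun t : ℝ => Emap φ v (t • f) x₀ := by
      have hfun : (fun t : ℝ => Emap φ v (t • f) x₀)
          = fun t : ℝ => x₀ + t • (φ x₀ v • f) - t • (φ x₀ f • v)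
              - (t * t) • ((1/2 * φ f f * φ x₀ v) • v) := by
        funext t
        rw [Emap_apply]
        simp only [map_smul, smul_eq_mul, LinearMap.smul_apply]
        module
      rw [hfun]; fun_prop
    have hK : (fun t : ℝ => Emap φ v (t • f) x₀) '' Set.Icc 0 1
        ⊆ connectedComponentIn S x₀ := by
      have h0 : x₀ ∈ (fun t : ℝ => Emap φ v (t • f) x₀) '' Set.Icc 0 1 :=
        ⟨0, Set.left_mem_Icc.2 zero_le_one, by simp [Emap_apply]⟩
      refine IsPreconnected.subset_connectedComponentIn
        (isPreconnected_Icc.image _ hpcont.continuousOn) h0 ?_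
      rintro _ ⟨t, -, rfl⟩; exact hmemS t
    have hEx₀ : Emap φ v f x₀ ∈ C := by
      rw [hCeq]
      refine hK ⟨1, Set.right_mem_Icc.2 zero_le_one, ?_⟩
      simp
    have hCrw : C = connectedComponentIn S (Emap φ v f x₀) := by
      rw [hCeq]; exact connectedComponentIn_eq (hCeq ▸ hEx₀)
    have hconn : IsPreconnected (Emap φ v f '' C) := by
      rw [hCeq]
      exact isPreconnected_connectedComponentIn.image _
        (Emap φ v f).continuous_of_finiteDimensional.continuousOn
    have hsub : Emap φ v f '' C ⊆ S := by
      rintro _ ⟨y, hy, rfl⟩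
      have h := Emap_isometry φ v f hsymm hviso hfv y y
      simpa [hSdef, h] using hCsubS hy
    have hmem : Emap φ v f x₀ ∈ Emap φ v f '' C :=
      ⟨x₀, hCeq ▸ mem_connectedComponentIn hx₀S, rfl⟩
    have := hconn.subset_connectedComponentIn hmem hsub
    exact hCrw ▸ this
  -- main fixed point computation
  ext x
  simp only [Set.mem_setOf_eq, SetLike.mem_coe]
  constructor
  · intro hx
    have hfix : ∀ f : L, φ f v = 0 → Emap φ v f x = x := by
      intro f hfv
      have hnfv : φ (-f) v = 0 := by simp [hfv]
      set g : L ≃ₗ[ℝ] L := LinearEquiv.ofLinear (Emap φ v f) (Emap φ v (-f))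
        (LinearMap.ext fun y => Emap_comp_neg φ v f hsymm hviso hfv y)
        (LinearMap.ext fun y => by
          simpa using Emap_comp_neg φ v (-f) hsymm hviso hnfv y) with hg
      have hco : ⇑g = ⇑(Emap φ v f) := rfl
      have h1 : ∀ a b : L, φ (g a) (g b) = φ a b := fun a b =>
        Emap_isometry φ v f hsymm hviso hfv a b
      have h2 : g '' C = C := by
        rw [hco]
        refine Set.Subset.antisymm (himg f hfv) ?_
        intro y hy
        exact ⟨Emap φ v (-f) y, himg (-f) hnfv ⟨y, hy, rfl⟩,
          Emap_comp_neg φ v f hsymm hviso hfv y⟩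
      have h3 : g v = v := Emap_fix φ v f hsymm hviso hfv
      have := hx g h1 h2 h3
      rwa [hco] at this
    -- φ x v = 0
    have hxv : φ x v = 0 := by
      by_contra hne
      have hker : LinearMap.ker (φ.flip v) ≤ Submodule.span ℝ {v} := by
        intro f hf
        have hfv : φ f v = 0 := hf
        have h := hfix f hfv
        rw [Emap_apply] at h
        have h' : φ x v • f = (φ x f + 1/2 * φ f f * φ x v) • v := by
          linear_combination (norm := module) h
        have hf' : f = (φ x v)⁻¹ • ((φ x f + 1/2 * φ f f * φ x v) • v) := by
          rw [← h', smul_smul, inv_mul_cancel₀ hne, one_smul]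
        rw [hf']
        exact Submodule.smul_mem _ _
          (Submodule.smul_mem _ _ (Submodule.mem_span_singleton_self v))
      have h1 : Module.finrank ℝ (LinearMap.ker (φ.flip v)) ≤ 1 := by
        have := Submodule.finrank_mono hker
        rwa [finrank_span_singleton hvne] at this
      have h2 := LinearMap.finrank_range_add_finrank_ker (φ.flip v)
      have h3 : Module.finrank ℝ (LinearMap.range (φ.flip v)) ≤ 1 := by
        have := Submodule.finrank_le (LinearMap.range (φ.flip v))
        simpa using this
      rw [hdim] at h2
      omega
    -- φ x f = 0 for all f ⊥ v
    have hxf : ∀ f : L, φ f v = 0 → φ x f = 0 := by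
      intro f hfv
      have h := hfix f hfv
      rw [Emap_apply] at h
      have h' : φ x f • v = 0 := by
        rw [hxv] at h
        simpa [sub_eq_self] using h
      exact (smul_eq_zero.mp h').resolve_right hvne
    -- conclude x ∈ span {v}
    obtain ⟨y₀, hy₀⟩ : ∃ y₀ : L, φ v y₀ ≠ 0 := by
      by_contra h
      push_neg at h
      exact hvne (hnd v h)
    set c := φ x y₀ / φ v y₀ with hc
    have hxz : ∀ z : L, φ x z = c * φ v z := by
      intro z
      have hz : φ (z - (φ v z / φ v y₀) • y₀) v = 0 := by
        rw [map_sub, map_smul]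
        simp only [smul_eq_mul, LinearMap.smul_apply, LinearMap.sub_apply]
        rw [hsymm z v, hsymm y₀ v]
        field_simp
        ring
      have h := hxf _ hz
      rw [map_sub, map_smul] at h
      simp only [smul_eq_mul] at h
      have : φ x z = (φ v z / φ v y₀) * φ x y₀ := by linarith
      rw [this, hc]
      field_simp
    have hxc : x = c • v := by
      have hz : ∀ z : L, φ (x - c • v) z = 0 := by
        intro z
        rw [map_sub, map_smul]
        simp [smul_eq_mul, hxz z, LinearMap.smul_apply, LinearMap.sub_apply]
      exact sub_eq_zero.mp (hnd _ hz)
    rw [hxc]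
    exact Submodule.smul_mem _ _ (Submodule.mem_span_singleton_self v)
  · intro hx g hgiso hgC hgv
    obtain ⟨c, rfl⟩ := Submodule.mem_span_singleton.mp hx
    rw [map_smul, hgv]
end
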